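/- Entropy stability of the stabilized flux (Theorem 2, stability inequality). Let left and right ideal MHD states be given (both with ρ > 0, p > 0), let f*ᵉᶜ be the entropy conserving numerical flux of Theorem 1, and let D be any real symmetric positive semidefinite 8×8 matrix. Then the entropy stable flux f* = f*ᵉᶜ − (1/2)·D·⟦v⃗⟧ satisfies the discrete entropy inequality ⟦v⃗⟧·f* − ⟦v⃗·f⃗⟧ − ⟦B₁⟧·(⟨z₁z₂⟩⟨z₆⟩ + ⟨z₁z₃⟩⟨z₇⟩ + ⟨z₁z₄⟩⟨z₈⟩) ≤ −⟦F⟧, with equality if and only if ⟦v⃗⟧ᵀD⟦v⃗⟧ = 0; in particular this applies to the ES-Roe choice D = R̂·|Λ̂|·S·R̂ᵀ, which is positive semidefinite whenever |Λ̂| and S are diagonal with nonnegative entries. -/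

import Mathlib

open Real Matrix

/-- An ideal MHD state: density, velocity components, pressure, magnetic field components. -/
structure MHD where
  ρ : ℝ
  u : ℝ
  v : ℝ
  w : ℝ
  p : ℝ
  B1 : ℝ
  B2 : ℝ
  B3 : ℝ

namespace MHD

noncomputable section

/-- ‖u⃗‖² -/
def uSq (S : MHD) : ℝ := S.u ^ 2 + S.v ^ 2 + S.w ^ 2

/-- ‖B⃗‖² -/
def BSq (S : MHD) : ℝ := S.B1 ^ 2 + S.B2 ^ 2 + S.B3 ^ 2

/-- u⃗·B⃗ -/
def uDotB (S : MHD) : ℝ := S.u * S.B1 + S.v * S.B2 + S.w * S.B3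

/-- physical entropy s = ln p − γ ln ρ -/
def ent (γ : ℝ) (S : MHD) : ℝ := Real.log S.p - γ * Real.log S.ρ

/-- total energy density ρe -/
def rhoE (γ : ℝ) (S : MHD) : ℝ := S.p / (γ - 1) + S.ρ * S.uSq / 2 + S.BSq / 2

/-- entropy density U = −ρs/(γ−1) -/
def entU (γ : ℝ) (S : MHD) : ℝ := -(S.ρ * S.ent γ) / (γ - 1)

/-- x-direction entropy flux F = uU -/
def entF (γ : ℝ) (S : MHD) : ℝ := S.u * S.entU γ

/-- the entropy variables v⃗ = U_q -/
def entVar (γ : ℝ) (S : MHD) : Fin 8 → ℝ :=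
  ![(γ - S.ent γ) / (γ - 1) - S.ρ * S.uSq / (2 * S.p),
    S.ρ * S.u / S.p, S.ρ * S.v / S.p, S.ρ * S.w / S.p,
    -(S.ρ / S.p), S.ρ * S.B1 / S.p, S.ρ * S.B2 / S.p, S.ρ * S.B3 / S.p]

/-- x-direction physical flux f⃗ -/
def fluxX (γ : ℝ) (S : MHD) : Fin 8 → ℝ :=
  ![S.ρ * S.u,
    S.ρ * S.u ^ 2 + S.p + S.BSq / 2 - S.B1 ^ 2,
    S.ρ * S.u * S.v - S.B1 * S.B2,
    S.ρ * S.u * S.w - S.B1 * S.B3,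
    S.u * (S.rhoE γ + S.p + S.BSq / 2) - S.B1 * S.uDotB,
    0,
    S.u * S.B2 - S.v * S.B1,
    S.u * S.B3 - S.w * S.B1]

/-- the parameter vector z -/
def z (S : MHD) : Fin 8 → ℝ :=
  ![Real.sqrt (S.ρ / S.p), Real.sqrt (S.ρ / S.p) * S.u, Real.sqrt (S.ρ / S.p) * S.v,
    Real.sqrt (S.ρ / S.p) * S.w, Real.sqrt (S.ρ * S.p), S.B1, S.B2, S.B3]

end

end MHD

noncomputable section

open MHD

/-- logarithmic mean: (x−y)/(ln x − ln y), with the consistent value x when x = y. -/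
def lm (x y : ℝ) : ℝ := if x = y then x else (x - y) / (Real.log x - Real.log y)

/-- arithmetic mean -/
def am (x y : ℝ) : ℝ := (x + y) / 2

/-- ⟨z_i⟩ (note: `zA L R 0` is ⟨z₁⟩, …, `zA L R 7` is ⟨z₈⟩) -/
def zA (L R : MHD) (i : Fin 8) : ℝ := am (L.z i) (R.z i)

/-- ⟨z_i z_j⟩ -/
def zP (L R : MHD) (i j : Fin 8) : ℝ := am (L.z i * L.z j) (R.z i * R.z j)

/-- ⟨z₁z₂⟩⟨z₆⟩ + ⟨z₁z₃⟩⟨z₇⟩ + ⟨z₁z₄⟩⟨z₈⟩, the x-direction source factor -/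
def srcX (L R : MHD) : ℝ :=
  zP L R 0 1 * zA L R 5 + zP L R 0 2 * zA L R 6 + zP L R 0 3 * zA L R 7

/-- the entropy conserving numerical flux of Theorem 1 (x-direction) -/
def ecFlux (γ : ℝ) (L R : MHD) : Fin 8 → ℝ :=
  ![zA L R 1 * lm (L.z 4) (R.z 4),
    zA L R 4 / zA L R 0 + (zA L R 1) ^ 2 * lm (L.z 4) (R.z 4) / zA L R 0
      + (zP L R 5 5 + zP L R 6 6 + zP L R 7 7) / 2 - zP L R 5 5,
    zA L R 1 * zA L R 2 * lm (L.z 4) (R.z 4) / zA L R 0 - zP L R 5 6,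
    zA L R 1 * zA L R 3 * lm (L.z 4) (R.z 4) / zA L R 0 - zP L R 5 7,
    (γ / (γ - 1)) * (zA L R 1 / zA L R 0) *
        (((γ + 1) / (2 * γ)) * lm (L.z 4) (R.z 4) / lm (L.z 0) (R.z 0)
          + ((γ - 1) / (2 * γ)) * (zA L R 4 / zA L R 0))
      + zA L R 1 * lm (L.z 4) (R.z 4) / 2 *
          ((zA L R 1) ^ 2 + (zA L R 2) ^ 2 + (zA L R 3) ^ 2) / (zA L R 0) ^ 2
      + (zA L R 6 / zP L R 0 0) * (zP L R 0 1 * zA L R 6 - zP L R 0 2 * zA L R 5)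
      + (zA L R 7 / zP L R 0 0) * (zP L R 0 1 * zA L R 7 - zP L R 0 3 * zA L R 5),
    0,
    (zP L R 0 1 * zA L R 6 - zP L R 0 2 * zA L R 5) / zP L R 0 0,
    (zP L R 0 1 * zA L R 7 - zP L R 0 3 * zA L R 5) / zP L R 0 0]

end

noncomputable section

open MHD

/-- the entropy balance at the interface for the stabilized flux
f* = f*ᵉᶜ − (1/2)·D·⟦v⃗⟧, namely ⟦v⃗⟧·f* − ⟦v⃗·f⃗⟧ − ⟦B₁⟧·(⟨z₁z₂⟩⟨z₆⟩+⟨z₁z₃⟩⟨z₇⟩+⟨z₁z₄⟩⟨z₈⟩). -/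
def esBalance (γ : ℝ) (L R : MHD) (D : Matrix (Fin 8) (Fin 8) ℝ) : ℝ :=
  (∑ i : Fin 8, (R.entVar γ i - L.entVar γ i) *
      (ecFlux γ L R i - (1 / 2) * D.mulVec (fun j => R.entVar γ j - L.entVar γ j) i))
    - ((∑ i : Fin 8, R.entVar γ i * R.fluxX γ i) - ∑ i : Fin 8, L.entVar γ i * L.fluxX γ i)
    - (R.B1 - L.B1) * srcX L R

end

/-! The stabilized flux differs from f*ᵉᶜ by −½·D⟦v⃗⟧, so the balance is the entropy-conservative
balance minus ½·⟦v⃗⟧ᵀD⟦v⃗⟧ ≤ 0. With the potential ψ = v⃗·f⃗ − F, the entropy-conservative balance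
equals −⟦F⟧ exactly when ⟦v⃗⟧·f*ᵉᶜ − ⟦B₁⟧·(⟨z₁z₂⟩⟨z₆⟩ + ⟨z₁z₃⟩⟨z₇⟩ + ⟨z₁z₄⟩⟨z₈⟩) = ⟦ψ⟧. Written in
the parameter vector z (so ρ = z₁z₅, p = z₅/z₁), this is a rational identity once the logarithmic
jumps are eliminated through ⟦ln z₁⟧ = ⟦z₁⟧/z₁ˡⁿ and ⟦ln z₅⟧ = ⟦z₅⟧/z₅ˡⁿ. The ES-Roe matrix
R̂·|Λ̂|·S·R̂ᵀ is a congruence of a nonnegative diagonal matrix, hence positive semidefinite. -/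

theorem lm_mul_log_sub_log {x y : ℝ} (hx : 0 < x) (hy : 0 < y) :
    lm x y * (Real.log y - Real.log x) = y - x := by
  unfold lm
  split_ifs with h
  · simp [h]
  · have hlog : Real.log x - Real.log y ≠ 0 :=
      sub_ne_zero.mpr fun he => h (Real.log_injOn_pos hx hy he)
    field_simp
    ring

theorem lm_pos {x y : ℝ} (hx : 0 < x) (hy : 0 < y) : 0 < lm x y := by
  unfold lm
  split_ifs with h
  · exact hx
  · rcases lt_or_gt_of_ne h with hlt | hlt
    · exact div_pos_of_neg_of_neg (by linarith) (by linarith [Real.log_lt_log hx hlt])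
    · exact div_pos (by linarith) (by linarith [Real.log_lt_log hy hlt])

theorem sum_mul_sub_half_mulVec {n : Type*} [Fintype n] (a f : n → ℝ) (D : Matrix n n ℝ) :
    ∑ i, a i * (f i - 1 / 2 * D.mulVec a i) = a ⬝ᵥ f - 1 / 2 * (a ⬝ᵥ D.mulVec a) := by
  simp only [dotProduct, mul_sub, Finset.sum_sub_distrib, Finset.mul_sum]
  congr 1
  exact Finset.sum_congr rfl fun i _ => by ring

theorem posSemidef_mul_diagonal_mul_diagonal_mul_transpose {n : Type*} [Fintype n] [DecidableEq n]
    (Rh : Matrix n n ℝ) {lam s : n → ℝ} (hlam : ∀ i, 0 ≤ lam i) (hs : ∀ i, 0 ≤ s i) :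
    (Rh * diagonal lam * diagonal s * Rhᵀ).PosSemidef := by
  have h := (PosSemidef.diagonal fun i => mul_nonneg (hlam i) (hs i)).mul_mul_conjTranspose_same Rh
  simpa [Matrix.mul_assoc, diagonal_mul_diagonal, conjTranspose_eq_transpose_of_trivial, Pi.mul_def]
    using h

namespace MHD

noncomputable def entPotential (S : MHD) : ℝ :=
  S.ρ * S.u + S.ρ / S.p * (S.u * S.BSq / 2 - S.B1 * S.uDotB)

theorem entVar_dotProduct_fluxX_sub_entF {γ : ℝ} (hγ : 1 < γ) {S : MHD} (hp : 0 < S.p) :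
    S.entVar γ ⬝ᵥ S.fluxX γ - S.entF γ = S.entPotential := by
  have hγ1 : γ - 1 ≠ 0 := by linarith
  have hp0 : S.p ≠ 0 := hp.ne'
  simp only [dotProduct, Fin.sum_univ_eight, entVar, fluxX, entF, entU, entPotential, rhoE, uSq,
    BSq, uDotB, Matrix.cons_val]
  field_simp
  ring

theorem z_zero_pos {S : MHD} (hρ : 0 < S.ρ) (hp : 0 < S.p) : 0 < S.z 0 :=
  Real.sqrt_pos.mpr (div_pos hρ hp)

theorem z_four_pos {S : MHD} (hρ : 0 < S.ρ) (hp : 0 < S.p) : 0 < S.z 4 :=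
  Real.sqrt_pos.mpr (mul_pos hρ hp)

theorem z_zero_mul_z_four {S : MHD} (hρ : 0 < S.ρ) (hp : 0 < S.p) : S.z 0 * S.z 4 = S.ρ := by
  change √(S.ρ / S.p) * √(S.ρ * S.p) = S.ρ
  rw [← Real.sqrt_mul (div_pos hρ hp).le, show S.ρ / S.p * (S.ρ * S.p) = S.ρ ^ 2 by field_simp,
    Real.sqrt_sq hρ.le]

theorem z_four_div_z_zero {S : MHD} (hρ : 0 < S.ρ) (hp : 0 < S.p) : S.z 4 / S.z 0 = S.p := by
  change √(S.ρ * S.p) / √(S.ρ / S.p) = S.p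
  rw [← Real.sqrt_div (mul_pos hρ hp).le, show S.ρ * S.p / (S.ρ / S.p) = S.p ^ 2 by field_simp,
    Real.sqrt_sq hp.le]

theorem ent_eq_log_z {S : MHD} (γ : ℝ) (hρ : 0 < S.ρ) (hp : 0 < S.p) :
    S.ent γ = (1 - γ) * Real.log (S.z 4) - (1 + γ) * Real.log (S.z 0) := by
  rw [ent, ← z_zero_mul_z_four hρ hp, ← z_four_div_z_zero hρ hp,
    Real.log_mul (z_zero_pos hρ hp).ne' (z_four_pos hρ hp).ne',
    Real.log_div (z_four_pos hρ hp).ne' (z_zero_pos hρ hp).ne']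
  ring

theorem entVar_eq_z {S : MHD} {γ : ℝ} (hγ : 1 < γ) (hρ : 0 < S.ρ) (hp : 0 < S.p) :
    S.entVar γ = ![γ / (γ - 1) + Real.log (S.z 4) + (γ + 1) / (γ - 1) * Real.log (S.z 0)
        - S.z 0 ^ 2 * S.uSq / 2, S.z 0 ^ 2 * S.u, S.z 0 ^ 2 * S.v, S.z 0 ^ 2 * S.w, -S.z 0 ^ 2,
      S.z 0 ^ 2 * S.B1, S.z 0 ^ 2 * S.B2, S.z 0 ^ 2 * S.B3] := by
  have hγ1 : γ - 1 ≠ 0 := by linarith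
  have ha := (z_zero_pos hρ hp).ne'
  have hb := (z_four_pos hρ hp).ne'
  rw [entVar, ent_eq_log_z γ hρ hp, ← z_zero_mul_z_four hρ hp, ← z_four_div_z_zero hρ hp]
  ext i
  fin_cases i <;> simp only [Fin.zero_eta, Fin.mk_one, Fin.reduceFinMk, Matrix.cons_val] <;>
    field_simp
  ring

theorem entPotential_eq_z {S : MHD} (hρ : 0 < S.ρ) (hp : 0 < S.p) :
    S.entPotential = S.z 0 * S.z 4 * S.u + S.z 0 ^ 2 * (S.u * S.BSq / 2 - S.B1 * S.uDotB) := by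
  have ha := (z_zero_pos hρ hp).ne'
  have hb := (z_four_pos hρ hp).ne'
  rw [entPotential, ← z_zero_mul_z_four hρ hp, ← z_four_div_z_zero hρ hp]
  field_simp

end MHD

open MHD in
theorem ecFlux_entropy_conservative {γ : ℝ} (hγ : 1 < γ) {L R : MHD}
    (hρL : 0 < L.ρ) (hpL : 0 < L.p) (hρR : 0 < R.ρ) (hpR : 0 < R.p) :
    (fun i => R.entVar γ i - L.entVar γ i) ⬝ᵥ ecFlux γ L R - (R.B1 - L.B1) * srcX L R
      = R.entPotential - L.entPotential := by
  have hγ1 : γ - 1 ≠ 0 := by linarith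
  have haL := z_zero_pos hρL hpL
  have haR := z_zero_pos hρR hpR
  have hbL := z_four_pos hρL hpL
  have hbR := z_four_pos hρR hpR
  have hm1 := lm_pos haL haR
  have hm5 := lm_pos hbL hbR
  have hlog1 : Real.log (R.z 0) = Real.log (L.z 0) + (R.z 0 - L.z 0) / lm (L.z 0) (R.z 0) := by
    rw [← lm_mul_log_sub_log haL haR]; field_simp; ring
  have hlog5 : Real.log (R.z 4) = Real.log (L.z 4) + (R.z 4 - L.z 4) / lm (L.z 4) (R.z 4) := by
    rw [← lm_mul_log_sub_log hbL hbR]; field_simp; ring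
  rw [entVar_eq_z hγ hρL hpL, entVar_eq_z hγ hρR hpR, entPotential_eq_z hρL hpL,
    entPotential_eq_z hρR hpR]
  have z1 : ∀ S : MHD, S.z 1 = S.z 0 * S.u := fun _ => rfl
  have z2 : ∀ S : MHD, S.z 2 = S.z 0 * S.v := fun _ => rfl
  have z3 : ∀ S : MHD, S.z 3 = S.z 0 * S.w := fun _ => rfl
  have z5 : ∀ S : MHD, S.z 5 = S.B1 := fun _ => rfl
  have z6 : ∀ S : MHD, S.z 6 = S.B2 := fun _ => rfl
  have z7 : ∀ S : MHD, S.z 7 = S.B3 := fun _ => rfl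
  simp only [dotProduct, Fin.sum_univ_eight, ecFlux, srcX, zA, zP, am, uSq, BSq, uDotB,
    Matrix.cons_val, z1, z2, z3, z5, z6, z7, hlog1, hlog5]
  field_simp
  ring

open MHD Matrix in
/-- entropy stability of the stabilized flux f* = f*ᵉᶜ − (1/2)·D·⟦v⃗⟧ for any
symmetric positive semidefinite dissipation matrix D, with equality iff ⟦v⃗⟧ᵀD⟦v⃗⟧ = 0;
and the ES-Roe choice D = R̂·|Λ̂|·S·R̂ᵀ is positive semidefinite whenever |Λ̂| and S are
diagonal with nonnegative entries. -/
theorem es_flux_entropy_stable (γ : ℝ) (hγ : 1 < γ) (L R : MHD)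
    (hρL : 0 < L.ρ) (hpL : 0 < L.p) (hρR : 0 < R.ρ) (hpR : 0 < R.p)
    (D : Matrix (Fin 8) (Fin 8) ℝ) (hD : D.PosSemidef) :
    esBalance γ L R D ≤ -(R.entF γ - L.entF γ)
    ∧ (esBalance γ L R D = -(R.entF γ - L.entF γ) ↔
        dotProduct (fun j => R.entVar γ j - L.entVar γ j)
          (D.mulVec fun j => R.entVar γ j - L.entVar γ j) = 0)
    ∧ (∀ (Rh : Matrix (Fin 8) (Fin 8) ℝ) (lam s : Fin 8 → ℝ),
        (∀ i, 0 ≤ lam i) → (∀ i, 0 ≤ s i) →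
        (Rh * Matrix.diagonal lam * Matrix.diagonal s * Rhᵀ).PosSemidef) := by
  set dv : Fin 8 → ℝ := fun j => R.entVar γ j - L.entVar γ j
  have hdiss : 0 ≤ dv ⬝ᵥ D *ᵥ dv := hD.dotProduct_mulVec_nonneg dv
  have hbal : esBalance γ L R D = -(R.entF γ - L.entF γ) - 1 / 2 * (dv ⬝ᵥ D *ᵥ dv) := by
    have hec := ecFlux_entropy_conservative hγ hρL hpL hρR hpR
    have hL := entVar_dotProduct_fluxX_sub_entF hγ hpL
    have hR := entVar_dotProduct_fluxX_sub_entF hγ hpR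
    rw [esBalance, sum_mul_sub_half_mulVec]
    simp only [dotProduct] at hL hR
    linarith
  refine ⟨by linarith, ⟨fun h => by linarith, fun h => by rw [hbal, h]; ring⟩,
    fun Rh lam s hlam hs => posSemidef_mul_diagonal_mul_diagonal_mul_transpose Rh hlam hs⟩
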